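/- With d_ε as above, there is a constant K (depending on ε) such that |d_ε(x₁, ν₁) − d_ε(x₂, ν₂)| ≤ K √(|x₁ − x₂|² + ρ(ν₁, ν₂)²) for all x₁, x₂ ∈ ℝ and finite measures ν₁, ν₂, where ρ is the bounded-Lipschitz distance. -/

import Mathlib

open MeasureTheory Real

/-- The truncation of a finite measure `ν` at total mass `M`. -/
noncomputable def truncMeasure (ν : Measure ℝ) (M : ℝ) : Measure ℝ :=
  (ENNReal.ofReal (min (ν Set.univ).toReal M / (ν Set.univ).toReal)) • ν

/-- The Gaussian density with variance `ε`. -/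
noncomputable def gaussKernel (ε x : ℝ) : ℝ :=
  (Real.sqrt (2 * π * ε))⁻¹ * Real.exp (-x ^ 2 / (2 * ε))

/-- The bounded-Lipschitz (Fortet–Mourier) distance between finite measures on `ℝ`. -/
noncomputable def blDist (ν₁ ν₂ : Measure ℝ) : ℝ :=
  sSup {r : ℝ | ∃ g : ℝ → ℝ, Continuous g ∧ (∀ x, |g x| ≤ 1) ∧ LipschitzWith 1 g ∧
    r = |∫ x, g x ∂ν₁ - ∫ x, g x ∂ν₂|}

open scoped NNReal

/-! The kernel `p_ε` is bounded by `(2πε)^{-1/2}` and `(√π ε)⁻¹`-Lipschitz. Moving `x` with the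
measure fixed costs at most `Lip(p_ε) |x₁ - x₂|` times the mass of `ν^ε`, which is at most `ε⁻¹`.
For the measure, write `ν^ε = c(m) ν` with `c(m) = min(m, ε⁻¹)/m` and `m` the mass of `ν`; then
`c₁a₁ - c₂a₂ = c₁(a₁ - a₂) + (c₁ - c₂)a₂`. The first term is at most `Cρ`, since a translate of
`p_ε` divided by `C = max(sup p_ε, Lip p_ε)` is admissible in `ρ`; the second is at most
`2C|m₁ - m₂| ≤ 2Cρ`, since the constant `1` is admissible as well. -/

noncomputable def truncFactor (m M : ℝ) : ℝ := min m M / m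

section truncFactor

variable {m m₁ m₂ M : ℝ}

lemma truncFactor_nonneg (hm : 0 ≤ m) (hM : 0 ≤ M) : 0 ≤ truncFactor m M :=
  div_nonneg (le_min hm hM) hm

lemma truncFactor_le_one (hm : 0 ≤ m) : truncFactor m M ≤ 1 :=
  div_le_one_of_le₀ (min_le_left _ _) hm

lemma truncFactor_mul_self (hm : 0 ≤ m) (hM : 0 ≤ M) : truncFactor m M * m = min m M := by
  rcases hm.eq_or_lt with rfl | hm
  · simp [min_eq_left hM]
  · exact div_mul_cancel₀ _ hm.ne'

lemma abs_truncFactor_sub_mul_le (h₁ : 0 ≤ m₁) (h₂ : 0 ≤ m₂) (hM : 0 ≤ M) :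
    |truncFactor m₁ M - truncFactor m₂ M| * m₂ ≤ 2 * |m₁ - m₂| := by
  have hmin : |min m₁ M - min m₂ M| ≤ |m₁ - m₂| := by
    simpa using abs_min_sub_min_le_max m₁ M m₂ M
  have hc : |truncFactor m₁ M * (m₂ - m₁)| ≤ |m₁ - m₂| := by
    rw [abs_mul, abs_of_nonneg (truncFactor_nonneg h₁ hM), abs_sub_comm]
    exact mul_le_of_le_one_left (abs_nonneg _) (truncFactor_le_one h₁)
  calc |truncFactor m₁ M - truncFactor m₂ M| * m₂
      = |(min m₁ M - min m₂ M) + truncFactor m₁ M * (m₂ - m₁)| := by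
        rw [← abs_of_nonneg h₂, ← abs_mul, abs_of_nonneg h₂, ← truncFactor_mul_self h₁ hM,
          ← truncFactor_mul_self h₂ hM]
        ring_nf
    _ ≤ 2 * |m₁ - m₂| := by
      linarith [abs_add_le (min m₁ M - min m₂ M) (truncFactor m₁ M * (m₂ - m₁))]

end truncFactor

lemma integral_truncMeasure (ν : Measure ℝ) {M : ℝ} (hM : 0 ≤ M) (f : ℝ → ℝ) :
    ∫ y, f y ∂truncMeasure ν M = truncFactor (ν.real Set.univ) M * ∫ y, f y ∂ν := by
  rw [truncMeasure, integral_smul_measure, smul_eq_mul, ENNReal.toReal_ofReal]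
  · rfl
  · exact truncFactor_nonneg ENNReal.toReal_nonneg hM

section blDist

variable (ν₁ ν₂ : Measure ℝ) [IsFiniteMeasure ν₁] [IsFiniteMeasure ν₂]

lemma bddAbove_blDist_set : BddAbove {r : ℝ | ∃ g : ℝ → ℝ, Continuous g ∧ (∀ x, |g x| ≤ 1) ∧
    LipschitzWith 1 g ∧ r = |∫ x, g x ∂ν₁ - ∫ x, g x ∂ν₂|} := by
  refine ⟨ν₁.real Set.univ + ν₂.real Set.univ, ?_⟩
  rintro r ⟨g, -, hg, -, rfl⟩
  have hbound (ν : Measure ℝ) [IsFiniteMeasure ν] : |∫ x, g x ∂ν| ≤ ν.real Set.univ := by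
    simpa using norm_integral_le_of_norm_le_const (μ := ν)
      (.of_forall fun x => (Real.norm_eq_abs (g x)).trans_le (hg x))
  exact (abs_sub _ _).trans (add_le_add (hbound ν₁) (hbound ν₂))

variable {ν₁ ν₂} in
lemma abs_integral_sub_le_blDist {g : ℝ → ℝ} (hg : LipschitzWith 1 g) (hb : ∀ x, |g x| ≤ 1) :
    |∫ x, g x ∂ν₁ - ∫ x, g x ∂ν₂| ≤ blDist ν₁ ν₂ :=
  le_csSup (bddAbove_blDist_set ν₁ ν₂) ⟨g, hg.continuous, hb, hg, rfl⟩

lemma abs_real_univ_sub_le_blDist : |ν₁.real Set.univ - ν₂.real Set.univ| ≤ blDist ν₁ ν₂ := by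
  simpa using abs_integral_sub_le_blDist (ν₁ := ν₁) (ν₂ := ν₂) (LipschitzWith.const' 1)
    (fun _ => by simp)

variable {ν₁ ν₂} in
lemma abs_integral_sub_le_mul_blDist {g : ℝ → ℝ} {C : ℝ≥0} (hg : LipschitzWith C g)
    (hb : ∀ x, |g x| ≤ C) :
    |∫ x, g x ∂ν₁ - ∫ x, g x ∂ν₂| ≤ C * blDist ν₁ ν₂ := by
  rcases eq_zero_or_pos C with rfl | hC
  · have hg0 : g = 0 := funext fun x => abs_nonpos_iff.mp (hb x)
    simp [hg0]
  have hC' : (0 : ℝ) < C := hC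
  have hlip : LipschitzWith 1 fun x => (C : ℝ)⁻¹ * g x := .of_dist_le_mul fun a b => by
    rw [Real.dist_eq, ← mul_sub, abs_mul, abs_inv, abs_of_pos hC', NNReal.coe_one, one_mul,
      inv_mul_le_iff₀ hC', ← Real.dist_eq]
    exact hg.dist_le_mul a b
  have hbound (x : ℝ) : |(C : ℝ)⁻¹ * g x| ≤ 1 := by
    rw [abs_mul, abs_inv, abs_of_pos hC', inv_mul_le_iff₀ hC', mul_one]
    exact hb x
  have := abs_integral_sub_le_blDist (ν₁ := ν₁) (ν₂ := ν₂) hlip hbound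
  rwa [integral_const_mul, integral_const_mul, ← mul_sub, abs_mul, abs_inv, abs_of_pos hC',
    inv_mul_le_iff₀ hC'] at this

end blDist

section truncMeasure

variable {M : ℝ}

lemma abs_integral_truncMeasure_sub_le_mul_blDist (ν₁ ν₂ : Measure ℝ) [IsFiniteMeasure ν₁]
    [IsFiniteMeasure ν₂] {g : ℝ → ℝ} {C : ℝ≥0} (hg : LipschitzWith C g) (hb : ∀ x, |g x| ≤ C)
    (hM : 0 ≤ M) :
    |∫ x, g x ∂truncMeasure ν₁ M - ∫ x, g x ∂truncMeasure ν₂ M| ≤ 3 * C * blDist ν₁ ν₂ := by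
  rw [integral_truncMeasure ν₁ hM, integral_truncMeasure ν₂ hM]
  set c₁ := truncFactor (ν₁.real Set.univ) M
  set c₂ := truncFactor (ν₂.real Set.univ) M
  have hc₁ : 0 ≤ c₁ := truncFactor_nonneg measureReal_nonneg hM
  have hρ : |∫ x, g x ∂ν₁ - ∫ x, g x ∂ν₂| ≤ C * blDist ν₁ ν₂ :=
    abs_integral_sub_le_mul_blDist hg hb
  have hν₂ : |∫ x, g x ∂ν₂| ≤ C * ν₂.real Set.univ :=
    norm_integral_le_of_norm_le_const
      (.of_forall fun x => (Real.norm_eq_abs (g x)).trans_le (hb x))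
  have hc : |c₁ - c₂| * ν₂.real Set.univ ≤ 2 * blDist ν₁ ν₂ :=
    (abs_truncFactor_sub_mul_le measureReal_nonneg measureReal_nonneg hM).trans
      (by linarith [abs_real_univ_sub_le_blDist ν₁ ν₂])
  calc |c₁ * ∫ x, g x ∂ν₁ - c₂ * ∫ x, g x ∂ν₂|
      = |c₁ * (∫ x, g x ∂ν₁ - ∫ x, g x ∂ν₂) + (c₁ - c₂) * ∫ x, g x ∂ν₂| := by ring_nf
    _ ≤ c₁ * |∫ x, g x ∂ν₁ - ∫ x, g x ∂ν₂| + |c₁ - c₂| * |∫ x, g x ∂ν₂| := by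
        rw [← abs_of_nonneg hc₁, ← abs_mul, ← abs_mul, abs_of_nonneg hc₁]
        exact abs_add_le _ _
    _ ≤ 1 * (C * blDist ν₁ ν₂) + |c₁ - c₂| * (C * ν₂.real Set.univ) := by
        gcongr
        exact truncFactor_le_one measureReal_nonneg
    _ = C * blDist ν₁ ν₂ + C * (|c₁ - c₂| * ν₂.real Set.univ) := by ring
    _ ≤ 3 * C * blDist ν₁ ν₂ := by nlinarith [C.coe_nonneg]

lemma abs_integral_truncMeasure_sub_le_mul (ν : Measure ℝ) [IsFiniteMeasure ν] {f g : ℝ → ℝ}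
    (hf : Integrable f ν) (hg : Integrable g ν) {δ : ℝ} (hfg : ∀ y, |f y - g y| ≤ δ)
    (hM : 0 ≤ M) :
    |∫ y, f y ∂truncMeasure ν M - ∫ y, g y ∂truncMeasure ν M| ≤ δ * M := by
  have hδ : 0 ≤ δ := (abs_nonneg _).trans (hfg 0)
  have hc := truncFactor_nonneg (M := M) (measureReal_nonneg (μ := ν) (s := Set.univ)) hM
  have hdiff : |∫ y, f y - g y ∂ν| ≤ δ * ν.real Set.univ :=
    norm_integral_le_of_norm_le_const
      (.of_forall fun y => (Real.norm_eq_abs _).trans_le (hfg y))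
  calc |∫ y, f y ∂truncMeasure ν M - ∫ y, g y ∂truncMeasure ν M|
      = truncFactor (ν.real Set.univ) M * |∫ y, f y - g y ∂ν| := by
        rw [integral_truncMeasure ν hM, integral_truncMeasure ν hM, ← mul_sub,
          integral_sub hf hg, abs_mul, abs_of_nonneg hc]
    _ ≤ truncFactor (ν.real Set.univ) M * (δ * ν.real Set.univ) := by gcongr
    _ = δ * min (ν.real Set.univ) M := by
        rw [← truncFactor_mul_self measureReal_nonneg hM]; ring
    _ ≤ δ * M := by gcongr; exact min_le_right _ _

end truncMeasure

lemma LipschitzWith.comp_const_sub {E F : Type*} [SeminormedAddCommGroup E] [PseudoMetricSpace F]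
    {f : E → F} {K : ℝ≥0} (hf : LipschitzWith K f) (x : E) :
    LipschitzWith K fun y => f (x - y) :=
  .of_dist_le_mul fun a b => (hf.dist_le_mul (x - a) (x - b)).trans_eq (by rw [dist_sub_left])

section gaussKernel

variable {ε : ℝ}

lemma gaussKernel_nonneg (ε x : ℝ) : 0 ≤ gaussKernel ε x := by
  unfold gaussKernel; positivity

lemma gaussKernel_le (hε : 0 ≤ ε) (x : ℝ) : gaussKernel ε x ≤ (√(2 * π * ε))⁻¹ := by
  refine mul_le_of_le_one_right (by positivity) (exp_le_one_iff.2 ?_)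
  exact div_nonpos_of_nonpos_of_nonneg (neg_nonpos.2 (sq_nonneg x)) (by positivity)

lemma hasDerivAt_gaussKernel (ε x : ℝ) :
    HasDerivAt (gaussKernel ε) (-(x / ε) * gaussKernel ε x) x := by
  refine (((hasDerivAt_pow 2 x).neg.div_const (2 * ε)).exp.const_mul
    (√(2 * π * ε))⁻¹).congr_deriv ?_
  simp only [gaussKernel, Pi.neg_apply, Nat.cast_ofNat, pow_one, Nat.add_one_sub_one,
    neg_div, ← mul_div_mul_left x ε two_ne_zero]
  ring

lemma abs_deriv_gaussKernel_le (hε : 0 < ε) (x : ℝ) :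
    |deriv (gaussKernel ε) x| ≤ (√π * ε)⁻¹ := by
  have hbound : |x * exp (-x ^ 2 / (2 * ε))| ≤ √(2 * ε) := by
    have := abs_mulExpNegMulSq_le (ε := (2 * ε)⁻¹) (x := x) (by positivity)
    rwa [mulExpNegSq_apply, sqrt_inv, inv_inv, show -((2 * ε)⁻¹ * x * x) = -x ^ 2 / (2 * ε) by
      ring] at this
  have hsqrt : √(2 * π * ε) = √π * √(2 * ε) := by
    rw [← sqrt_mul pi_pos.le]; ring_nf
  calc |deriv (gaussKernel ε) x|
      = (√(2 * π * ε))⁻¹ / ε * |x * exp (-x ^ 2 / (2 * ε))| := by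
        rw [(hasDerivAt_gaussKernel ε x).deriv, gaussKernel, abs_mul, abs_neg, abs_div,
          abs_of_pos hε, abs_mul, abs_mul, abs_of_pos (by positivity : 0 < (√(2 * π * ε))⁻¹),
          abs_of_pos (exp_pos _)]
        ring
    _ ≤ (√(2 * π * ε))⁻¹ / ε * √(2 * ε) := by gcongr
    _ = (√π * ε)⁻¹ := by rw [hsqrt]; field_simp

lemma lipschitzWith_gaussKernel (hε : 0 < ε) :
    LipschitzWith (√π * ε)⁻¹.toNNReal (gaussKernel ε) :=
  lipschitzWith_of_nnnorm_deriv_le (fun x => (hasDerivAt_gaussKernel ε x).differentiableAt)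
    fun x => by
      rw [← NNReal.coe_le_coe, coe_nnnorm, Real.norm_eq_abs, Real.coe_toNNReal _ (by positivity)]
      exact abs_deriv_gaussKernel_le hε x

end gaussKernel

lemma mul_add_mul_le_add_mul_sqrt {a b u v : ℝ} (ha : 0 ≤ a) (hb : 0 ≤ b) :
    a * u + b * v ≤ (a + b) * √(u ^ 2 + v ^ 2) := by
  have hu : u ≤ √(u ^ 2 + v ^ 2) := le_sqrt_of_sq_le (le_add_of_nonneg_right (sq_nonneg v))
  have hv : v ≤ √(u ^ 2 + v ^ 2) := le_sqrt_of_sq_le (le_add_of_nonneg_left (sq_nonneg u))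
  nlinarith

/-- For `d_ε(x, ν) = −∫ p_ε(x − y) ν^ε(dy)` there is a constant `K` (depending on `ε`)
such that `|d_ε(x₁, ν₁) − d_ε(x₂, ν₂)| ≤ K √(|x₁ − x₂|² + ρ(ν₁, ν₂)²)`. -/
theorem d_eps_lipschitz (ε : ℝ) (hε : 0 < ε) :
    ∃ K : ℝ, ∀ (x₁ x₂ : ℝ) (ν₁ ν₂ : Measure ℝ),
      IsFiniteMeasure ν₁ → IsFiniteMeasure ν₂ →
      |(-∫ y, gaussKernel ε (x₁ - y) ∂(truncMeasure ν₁ ε⁻¹)) -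
        (-∫ y, gaussKernel ε (x₂ - y) ∂(truncMeasure ν₂ ε⁻¹))|
        ≤ K * Real.sqrt (|x₁ - x₂| ^ 2 + (blDist ν₁ ν₂) ^ 2) := by
  set L : ℝ≥0 := (√π * ε)⁻¹.toNNReal
  set C : ℝ≥0 := max (√(2 * π * ε))⁻¹.toNNReal L
  have hlip : LipschitzWith C (gaussKernel ε) :=
    (lipschitzWith_gaussKernel hε).weaken (le_max_right _ _)
  have hbound (x : ℝ) : |gaussKernel ε x| ≤ C := by
    rw [abs_of_nonneg (gaussKernel_nonneg ε x)]
    exact (gaussKernel_le hε.le x).trans ((Real.le_coe_toNNReal _).trans (le_max_left _ _))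
  refine ⟨L * ε⁻¹ + 3 * C, fun x₁ x₂ ν₁ ν₂ _ _ => ?_⟩
  have hint (x : ℝ) : Integrable (fun y => gaussKernel ε (x - y)) ν₁ :=
    .of_bound ((hlip.comp_const_sub x).continuous.aestronglyMeasurable) C
      (.of_forall fun y => (Real.norm_eq_abs _).trans_le (hbound _))
  have hshift := abs_integral_truncMeasure_sub_le_mul ν₁ (hint x₁) (hint x₂)
    (δ := L * |x₁ - x₂|) (fun y => by
      have := (lipschitzWith_gaussKernel hε).dist_le_mul (x₁ - y) (x₂ - y)
      rwa [Real.dist_eq, Real.dist_eq, sub_sub_sub_cancel_right] at this)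
    (inv_nonneg.2 hε.le)
  have hmeas := abs_integral_truncMeasure_sub_le_mul_blDist ν₁ ν₂ (hlip.comp_const_sub x₂)
    (fun y => hbound _) (inv_nonneg.2 hε.le)
  rw [neg_sub_neg, abs_sub_comm]
  calc _ ≤ _ + _ := abs_sub_le _ (∫ y, gaussKernel ε (x₂ - y) ∂truncMeasure ν₁ ε⁻¹) _
    _ ≤ L * |x₁ - x₂| * ε⁻¹ + 3 * C * blDist ν₁ ν₂ := add_le_add hshift hmeas
    _ = L * ε⁻¹ * |x₁ - x₂| + 3 * C * blDist ν₁ ν₂ := by ring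
    _ ≤ _ := mul_add_mul_le_add_mul_sqrt (by positivity) (by positivity)
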